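/- arXiv:1606.04620 — 2 statements merged into one kernel-verified Lean document; each statement's English description precedes it below -/
import Mathlib

section
/- Let Ω ⊆ ℝⁿ (n ≥ 2) be a nonempty, open, bounded set and let G ⊆ Ω be Lebesgue-measurable with P_Ω(G) < ∞. Let ξ_k ↘ 0 and let φ_k : Ω → ℝ (k = 1, 2, …) be continuously differentiable with x ↦ |∇φ_k(x)|² and x ↦ W(φ_k(x)) Lebesgue integrable on Ω. Assume φ_k → χ_G almost everywhere in Ω and ∫_Ω [(ξ_k/2)|∇φ_k|² + W(φ_k)/ξ_k] dx → P_Ω(G) as k → ∞. Then the discrepancy satisfies ∫_Ω | (ξ_k/2)|∇φ_k|² − W(φ_k)/ξ_k | dx → 0 as k → ∞ (asymptotic equi-partition of energy). -/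
open MeasureTheory Filter Topology RealInnerProductSpace

/-- The quartic double-well potential `W(s) = 18 s² (1-s)²`. -/
noncomputable def W (s : ℝ) : ℝ := 18 * s ^ 2 * (1 - s) ^ 2

/-- Divergence of a vector field on `ℝⁿ`. -/
noncomputable def vdiv {n : ℕ} (g : EuclideanSpace ℝ (Fin n) → EuclideanSpace ℝ (Fin n))
    (x : EuclideanSpace ℝ (Fin n)) : ℝ :=
  ∑ i, fderiv ℝ g x (EuclideanSpace.single i 1) i

/-- The set of numbers `∫_G div g` over admissible test vector fields `g` (C¹, compactly
supported in `Ω`, with `|g| ≤ 1`), whose supremum is the perimeter of `G` in `Ω`. -/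
noncomputable def perimSet {n : ℕ} (Ω G : Set (EuclideanSpace ℝ (Fin n))) : Set ℝ :=
  { r | ∃ g : EuclideanSpace ℝ (Fin n) → EuclideanSpace ℝ (Fin n),
      ContDiff ℝ 1 g ∧ HasCompactSupport g ∧ tsupport g ⊆ Ω ∧
      (∀ x, ‖g x‖ ≤ 1) ∧ r = ∫ x in G, vdiv g x }

/-- The perimeter `P_Ω(G)` of `G` in `Ω`. -/
noncomputable def perim {n : ℕ} (Ω G : Set (EuclideanSpace ℝ (Fin n))) : ℝ :=
  sSup (perimSet Ω G)

/-!
Let `Φ` be a primitive of `√(2W)` truncated to `[0, 1]`, so that `Φ 0 = 0` and `Φ 1 = 1`.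
By the chain rule `|∇(Φ ∘ φ_k)| ≤ √(2W(φ_k)) |∇φ_k|`, and by AM-GM this is at most the energy
density `ξ_k/2 |∇φ_k|² + W(φ_k)/ξ_k`. For an admissible field `g`, integration by parts and
dominated convergence give `∫_G div g = lim ∫_Ω Φ(φ_k) div g ≤ liminf S_k`, where
`S_k = ∫_Ω √(2W(φ_k)) |∇φ_k|`; hence `S_k` and the energies `E_k` both tend to `P_Ω(G)`.
Pointwise, `|A - B| ≤ ε (A + B) + (A + B - 2√(AB)) / ε` with `A = ξ/2 |∇φ|²`, `B = W(φ)/ξ` and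
`2√(AB) = √(2W(φ)) |∇φ|`, so the discrepancy is at most `ε E_k + (E_k - S_k) / ε → ε P_Ω(G)`.
-/

lemma W_nonneg (s : ℝ) : 0 ≤ W s := by
  unfold W; positivity

lemma continuous_W : Continuous W := by
  unfold W; fun_prop

/-- `√(2W)` on `[0, 1]`, zero outside; the constant `18` in `W` makes its total mass `1`. -/
noncomputable def wellDensity (s : ℝ) : ℝ := 6 * max (s * (1 - s)) 0

noncomputable def wellProfile (t : ℝ) : ℝ := ∫ s in (0 : ℝ)..t, wellDensity s

lemma continuous_wellDensity : Continuous wellDensity := by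
  unfold wellDensity; fun_prop

lemma wellDensity_nonneg (s : ℝ) : 0 ≤ wellDensity s := by
  unfold wellDensity; positivity

lemma wellDensity_le_sqrt (s : ℝ) : wellDensity s ≤ √(2 * W s) := by
  have h : 2 * W s = (6 * (s * (1 - s))) ^ 2 := by unfold W; ring
  rw [h, Real.sqrt_sq_eq_abs, abs_mul, abs_of_pos (by norm_num : (0 : ℝ) < 6)]
  exact mul_le_mul_of_nonneg_left (max_le (le_abs_self _) (abs_nonneg _)) (by norm_num)

lemma wellDensity_eq_zero {s : ℝ} (hs : s ≤ 0 ∨ 1 ≤ s) : wellDensity s = 0 := by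
  have : s * (1 - s) ≤ 0 := by
    rcases hs with hs | hs <;> nlinarith
  simp [wellDensity, max_eq_right this]

lemma hasDerivAt_wellProfile (t : ℝ) : HasDerivAt wellProfile (wellDensity t) t :=
  intervalIntegral.integral_hasDerivAt_right (continuous_wellDensity.intervalIntegrable _ _)
    (continuous_wellDensity.stronglyMeasurableAtFilter _ _) continuous_wellDensity.continuousAt

lemma deriv_wellProfile : deriv wellProfile = wellDensity :=
  funext fun t => (hasDerivAt_wellProfile t).deriv

lemma contDiff_wellProfile : ContDiff ℝ 1 wellProfile :=
  contDiff_one_iff_deriv.2 ⟨fun t => (hasDerivAt_wellProfile t).differentiableAt,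
    deriv_wellProfile ▸ continuous_wellDensity⟩

lemma monotone_wellProfile : Monotone wellProfile :=
  monotone_of_deriv_nonneg (fun t => (hasDerivAt_wellProfile t).differentiableAt)
    fun t => deriv_wellProfile ▸ wellDensity_nonneg t

lemma wellProfile_of_nonpos {t : ℝ} (ht : t ≤ 0) : wellProfile t = 0 := by
  rw [wellProfile, intervalIntegral.integral_congr (g := fun _ => (0 : ℝ)),
    intervalIntegral.integral_zero]
  intro s hs
  rw [Set.uIcc_of_ge ht] at hs
  exact wellDensity_eq_zero (Or.inl hs.2)

lemma wellProfile_one : wellProfile 1 = 1 := by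
  have h : Set.EqOn wellDensity (fun s => 6 * s - 6 * s ^ 2) (Set.uIcc 0 1) := by
    intro s hs
    rw [Set.uIcc_of_le zero_le_one] at hs
    simp only [wellDensity, max_eq_left (mul_nonneg hs.1 (sub_nonneg.2 hs.2))]
    ring
  have hF : ∀ s ∈ Set.uIcc (0 : ℝ) 1,
      HasDerivAt (fun s => 3 * s ^ 2 - 2 * s ^ 3) (6 * s - 6 * s ^ 2) s := fun s _ =>
    (((hasDerivAt_pow 2 s).const_mul 3).sub ((hasDerivAt_pow 3 s).const_mul 2)).congr_deriv
      (by norm_num; ring)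
  have hcont : Continuous fun s : ℝ => 6 * s - 6 * s ^ 2 := by fun_prop
  rw [wellProfile, intervalIntegral.integral_congr h,
    intervalIntegral.integral_eq_sub_of_hasDerivAt hF (hcont.intervalIntegrable 0 1)]
  norm_num

lemma wellProfile_of_one_le {t : ℝ} (ht : 1 ≤ t) : wellProfile t = 1 := by
  have h : ∫ s in (1 : ℝ)..t, wellDensity s = 0 := by
    rw [intervalIntegral.integral_congr (g := fun _ => (0 : ℝ)), intervalIntegral.integral_zero]
    intro s hs
    rw [Set.uIcc_of_le ht] at hs
    exact wellDensity_eq_zero (Or.inr hs.1)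
  rw [wellProfile, ← intervalIntegral.integral_add_adjacent_intervals
    (continuous_wellDensity.intervalIntegrable 0 1) (continuous_wellDensity.intervalIntegrable 1 t),
    h, add_zero]
  exact wellProfile_one

lemma abs_wellProfile_le_one (t : ℝ) : |wellProfile t| ≤ 1 := by
  have h0 := monotone_wellProfile (min_le_left t 0)
  have h1 := monotone_wellProfile (le_max_left t 1)
  rw [wellProfile_of_nonpos (min_le_right t 0)] at h0
  rw [wellProfile_of_one_le (le_max_right t 1)] at h1
  exact abs_le.2 ⟨by linarith, h1⟩

lemma wellProfile_indicator_one {α : Type*} (G : Set α) (x : α) :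
    wellProfile (G.indicator (fun _ => 1) x) = G.indicator (fun _ => 1) x := by
  by_cases hx : x ∈ G <;> simp [hx, wellProfile_one, wellProfile_of_nonpos le_rfl]

lemma sqrt_two_mul_mul_le {ξ w t : ℝ} (hξ : 0 < ξ) (hw : 0 ≤ w) :
    √(2 * w) * t ≤ ξ / 2 * t ^ 2 + w / ξ := by
  have hs : √(2 * w) ^ 2 = 2 * w := Real.sq_sqrt (by positivity)
  have key : ξ / 2 * t ^ 2 + w / ξ - √(2 * w) * t = (ξ * t - √(2 * w)) ^ 2 / (2 * ξ) := by
    field_simp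
    linear_combination (-1 : ℝ) * hs
  rw [← sub_nonneg, key]
  positivity

/-- Writing `A = p²`, `B = q²`, `s = 2pq`, this is `|p² - q²| = |p - q| (p + q)` followed by
Young's inequality. -/
lemma abs_sub_le_of_sq_eq {A B s ε : ℝ} (hε : 0 < ε) (hA : 0 ≤ A) (hB : 0 ≤ B) (hs : 0 ≤ s)
    (hsAB : s ^ 2 = 4 * A * B) :
    |A - B| ≤ ε * (A + B) + (A + B - s) / ε := by
  obtain ⟨p, hp, rfl⟩ : ∃ p, 0 ≤ p ∧ p ^ 2 = A := ⟨√A, Real.sqrt_nonneg A, Real.sq_sqrt hA⟩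
  obtain ⟨q, hq, rfl⟩ : ∃ q, 0 ≤ q ∧ q ^ 2 = B := ⟨√B, Real.sqrt_nonneg B, Real.sq_sqrt hB⟩
  obtain rfl : s = 2 * p * q := by
    have h : s ^ 2 = (2 * p * q) ^ 2 := by rw [hsAB]; ring
    exact (pow_left_inj₀ hs (by positivity) two_ne_zero).1 h
  rw [← sub_nonneg]
  have key : ε * (p ^ 2 + q ^ 2) + (p ^ 2 + q ^ 2 - 2 * p * q) / ε - |p ^ 2 - q ^ 2| ≥
      (ε * (p + q) - |p - q|) ^ 2 / (2 * ε) := by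
    rw [show p ^ 2 - q ^ 2 = (p - q) * (p + q) by ring, abs_mul,
      abs_of_nonneg (by positivity : 0 ≤ p + q), ge_iff_le, div_le_iff₀ (by positivity)]
    field_simp
    nlinarith [sq_abs (p - q), sq_nonneg (p - q), sq_nonneg (p + q), abs_nonneg (p - q),
      mul_pos hε hε]
  linarith [div_nonneg (sq_nonneg (ε * (p + q) - |p - q|)) (by positivity : (0 : ℝ) ≤ 2 * ε)]

lemma ContDiffOn.contDiff_smul_of_tsupport_subset {E F : Type*} [NormedAddCommGroup E]
    [NormedSpace ℝ E] [NormedAddCommGroup F] [NormedSpace ℝ F] {Ω : Set E} (hΩ : IsOpen Ω)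
    {u : E → ℝ} (hu : ContDiffOn ℝ 1 u Ω) {g : E → F} (hg : ContDiff ℝ 1 g)
    (hgΩ : tsupport g ⊆ Ω) : ContDiff ℝ 1 fun x => u x • g x := by
  refine contDiff_iff_contDiffAt.2 fun x => ?_
  by_cases hx : x ∈ Ω
  · exact (hu.contDiffAt (hΩ.mem_nhds hx)).smul hg.contDiffAt
  · refine contDiffAt_const (c := (0 : F)).congr_of_eventuallyEq ?_
    filter_upwards [(isClosed_tsupport g).isOpen_compl.mem_nhds fun h => hx (hgΩ h)] with y hy
    simp [image_eq_zero_of_notMem_tsupport hy]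

section Divergence

variable {n : ℕ}

lemma vdiv_eq_sum_proj (g : EuclideanSpace ℝ (Fin n) → EuclideanSpace ℝ (Fin n))
    (x : EuclideanSpace ℝ (Fin n)) :
    vdiv g x = ∑ i, EuclideanSpace.proj i (fderiv ℝ g x (EuclideanSpace.single i 1)) := rfl

lemma continuous_vdiv {g : EuclideanSpace ℝ (Fin n) → EuclideanSpace ℝ (Fin n)}
    (hg : ContDiff ℝ 1 g) : Continuous (vdiv g) := by
  have hg' := hg.continuous_fderiv one_ne_zero
  simp only [funext (vdiv_eq_sum_proj g)]
  fun_prop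

lemma support_vdiv_subset (g : EuclideanSpace ℝ (Fin n) → EuclideanSpace ℝ (Fin n)) :
    Function.support (vdiv g) ⊆ tsupport g := by
  intro x hx
  apply support_fderiv_subset (𝕜 := ℝ)
  intro h
  simp [vdiv, h] at hx

lemma HasCompactSupport.vdiv {g : EuclideanSpace ℝ (Fin n) → EuclideanSpace ℝ (Fin n)}
    (hg : HasCompactSupport g) : HasCompactSupport (vdiv g) :=
  hg.mono' (support_vdiv_subset g)

lemma integrable_vdiv {g : EuclideanSpace ℝ (Fin n) → EuclideanSpace ℝ (Fin n)}
    (hg : ContDiff ℝ 1 g) (hgc : HasCompactSupport g) : Integrable (vdiv g) :=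
  (continuous_vdiv hg).integrable_of_hasCompactSupport hgc.vdiv

lemma integral_vdiv_eq_zero {F : EuclideanSpace ℝ (Fin n) → EuclideanSpace ℝ (Fin n)}
    (hF : ContDiff ℝ 1 F) (hFc : HasCompactSupport F) : ∫ x, vdiv F x = 0 := by
  have hFd : Differentiable ℝ F := hF.differentiable one_ne_zero
  have hF' : Continuous (fderiv ℝ F) := hF.continuous_fderiv one_ne_zero
  have hint (v : EuclideanSpace ℝ (Fin n)) : Integrable fun x => fderiv ℝ F x v :=
    (hF'.clm_apply continuous_const).integrable_of_hasCompactSupport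
      (hFc.fderiv_apply (𝕜 := ℝ) v)
  have hzero (v : EuclideanSpace ℝ (Fin n)) : ∫ x, fderiv ℝ F x v = 0 := by
    simpa using integral_smul_fderiv_eq_neg_fderiv_smul_of_integrable (f := fun _ => (1 : ℝ))
      (g := F) (v := v) (μ := volume) (by simp) (by simpa using hint v)
      (by simpa using hF.continuous.integrable_of_hasCompactSupport hFc)
      (fun _ _ => differentiableAt_const _) (fun x _ => hFd x)
  have hproj (i : Fin n) : Integrable fun x =>
      EuclideanSpace.proj (𝕜 := ℝ) i (fderiv ℝ F x (EuclideanSpace.single i 1)) :=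
    (EuclideanSpace.proj (𝕜 := ℝ) i).integrable_comp (hint _)
  rw [funext (vdiv_eq_sum_proj F), integral_finsetSum _ fun i _ => hproj i]
  refine Finset.sum_eq_zero fun i _ => ?_
  rw [ContinuousLinearMap.integral_comp_comm _ (hint _), hzero, map_zero]

lemma sum_apply_single_mul (L : EuclideanSpace ℝ (Fin n) →L[ℝ] ℝ) (v : EuclideanSpace ℝ (Fin n)) :
    ∑ i, L (EuclideanSpace.single i 1) * v i = L v := by
  conv_rhs => rw [← (EuclideanSpace.basisFun (Fin n) ℝ).sum_repr v]
  simp [map_sum, mul_comm]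

lemma vdiv_smul {u : EuclideanSpace ℝ (Fin n) → ℝ}
    {g : EuclideanSpace ℝ (Fin n) → EuclideanSpace ℝ (Fin n)} {x : EuclideanSpace ℝ (Fin n)}
    (hu : DifferentiableAt ℝ u x) (hg : DifferentiableAt ℝ g x) :
    vdiv (fun y => u y • g y) x = u x * vdiv g x + fderiv ℝ u x (g x) := by
  have h : HasFDerivAt (fun y => u y • g y)
      (u x • fderiv ℝ g x + (fderiv ℝ u x).smulRight (g x)) x :=
    hu.hasFDerivAt.smul hg.hasFDerivAt
  simp [vdiv, h.fderiv, Finset.mul_sum, Finset.sum_add_distrib,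
    ← sum_apply_single_mul (fderiv ℝ u x) (g x)]

lemma setIntegral_mul_vdiv_add_fderiv_eq_zero {Ω : Set (EuclideanSpace ℝ (Fin n))}
    (hΩ : IsOpen Ω) {u : EuclideanSpace ℝ (Fin n) → ℝ} (hu : ContDiffOn ℝ 1 u Ω)
    {g : EuclideanSpace ℝ (Fin n) → EuclideanSpace ℝ (Fin n)} (hg : ContDiff ℝ 1 g)
    (hgc : HasCompactSupport g) (hgΩ : tsupport g ⊆ Ω) :
    ∫ x in Ω, (u x * vdiv g x + fderiv ℝ u x (g x)) = 0 := by
  have hF := hu.contDiff_smul_of_tsupport_subset hΩ hg hgΩ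
  calc ∫ x in Ω, (u x * vdiv g x + fderiv ℝ u x (g x))
      = ∫ x in Ω, vdiv (fun y => u y • g y) x :=
        setIntegral_congr_fun hΩ.measurableSet fun x hx => (vdiv_smul
          ((hu.differentiableOn one_ne_zero).differentiableAt (hΩ.mem_nhds hx))
          (hg.differentiable one_ne_zero x)).symm
    _ = ∫ x, vdiv (fun y => u y • g y) x :=
        setIntegral_eq_integral_of_forall_compl_eq_zero fun x hx =>
          Function.notMem_support.1 fun h => hx (hgΩ (support_vdiv_subset _ h |>
            tsupport_smul_subset_right _ _))
    _ = 0 := integral_vdiv_eq_zero hF (hgc.smul_left (f := u))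

end Divergence

lemma norm_gradient {F : Type*} [NormedAddCommGroup F] [InnerProductSpace ℝ F] [CompleteSpace F]
    (f : F → ℝ) (x : F) : ‖gradient f x‖ = ‖fderiv ℝ f x‖ :=
  (InnerProductSpace.toDual ℝ F).symm.norm_map _

lemma ContDiffOn.continuousOn_norm_gradient {F : Type*} [NormedAddCommGroup F]
    [InnerProductSpace ℝ F] [CompleteSpace F] {Ω : Set F} (hΩ : IsOpen Ω) {f : F → ℝ}
    (hf : ContDiffOn ℝ 1 f Ω) : ContinuousOn (fun x => ‖gradient f x‖) Ω := by
  simp only [norm_gradient]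
  exact (hf.continuousOn_fderiv_of_isOpen hΩ le_rfl).norm

section Energy

variable {n : ℕ} {Ω : Set (EuclideanSpace ℝ (Fin n))} {φ : EuclideanSpace ℝ (Fin n) → ℝ}
  {g : EuclideanSpace ℝ (Fin n) → EuclideanSpace ℝ (Fin n)}

lemma abs_fderiv_wellProfile_comp_apply_le {x v : EuclideanSpace ℝ (Fin n)}
    (hφ : DifferentiableAt ℝ φ x) (hv : ‖v‖ ≤ 1) :
    |fderiv ℝ (fun y => wellProfile (φ y)) x v| ≤ √(2 * W (φ x)) * ‖gradient φ x‖ := by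
  have h : HasFDerivAt (fun y => wellProfile (φ y)) (wellDensity (φ x) • fderiv ℝ φ x) x :=
    (hasDerivAt_wellProfile (φ x)).comp_hasFDerivAt x hφ.hasFDerivAt
  rw [h.fderiv, ← Real.norm_eq_abs, norm_gradient]
  calc ‖(wellDensity (φ x) • fderiv ℝ φ x) v‖
      ≤ ‖wellDensity (φ x) • fderiv ℝ φ x‖ * 1 := (ContinuousLinearMap.le_opNorm _ _).trans
        (mul_le_mul_of_nonneg_left hv (norm_nonneg _))
    _ ≤ √(2 * W (φ x)) * ‖fderiv ℝ φ x‖ := by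
        rw [mul_one, norm_smul, Real.norm_of_nonneg (wellDensity_nonneg _)]
        exact mul_le_mul_of_nonneg_right (wellDensity_le_sqrt _) (norm_nonneg _)

lemma integrableOn_wellProfile_comp_mul_vdiv (hΩ : MeasurableSet Ω) (hφ : ContinuousOn φ Ω)
    (hg : ContDiff ℝ 1 g) (hgc : HasCompactSupport g) :
    IntegrableOn (fun x => wellProfile (φ x) * vdiv g x) Ω :=
  (integrable_vdiv hg hgc).integrableOn.bdd_mul
    ((contDiff_wellProfile.continuous.comp_continuousOn hφ).aestronglyMeasurable hΩ)
    (Eventually.of_forall fun _ => (Real.norm_eq_abs _).trans_le (abs_wellProfile_le_one _))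

lemma setIntegral_wellProfile_comp_mul_vdiv_le (hΩ : IsOpen Ω) (hφ : ContDiffOn ℝ 1 φ Ω)
    (hs : IntegrableOn (fun x => √(2 * W (φ x)) * ‖gradient φ x‖) Ω) (hg : ContDiff ℝ 1 g)
    (hgc : HasCompactSupport g) (hgΩ : tsupport g ⊆ Ω) (hg1 : ∀ x, ‖g x‖ ≤ 1) :
    ∫ x in Ω, wellProfile (φ x) * vdiv g x ≤ ∫ x in Ω, √(2 * W (φ x)) * ‖gradient φ x‖ := by
  have hu : ContDiffOn ℝ 1 (fun x => wellProfile (φ x)) Ω :=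
    contDiff_wellProfile.comp_contDiffOn hφ
  have hbound : ∀ x ∈ Ω, |fderiv ℝ (fun y => wellProfile (φ y)) x (g x)| ≤
      √(2 * W (φ x)) * ‖gradient φ x‖ := fun x hx =>
    abs_fderiv_wellProfile_comp_apply_le
      ((hφ.differentiableOn one_ne_zero).differentiableAt (hΩ.mem_nhds hx)) (hg1 x)
  have hDu : IntegrableOn (fun x => fderiv ℝ (fun y => wellProfile (φ y)) x (g x)) Ω :=
    hs.mono' (((hu.continuousOn_fderiv_of_isOpen hΩ le_rfl).clm_apply
      hg.continuous.continuousOn).aestronglyMeasurable hΩ.measurableSet)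
      ((ae_restrict_iff' hΩ.measurableSet).2 (Eventually.of_forall hbound))
  have hibp := setIntegral_mul_vdiv_add_fderiv_eq_zero hΩ hu hg hgc hgΩ
  rw [integral_add (integrableOn_wellProfile_comp_mul_vdiv hΩ.measurableSet hφ.continuousOn
    hg hgc) hDu, add_eq_zero_iff_eq_neg] at hibp
  rw [hibp]
  calc -∫ x in Ω, fderiv ℝ (fun y => wellProfile (φ y)) x (g x)
      ≤ ∫ x in Ω, |fderiv ℝ (fun y => wellProfile (φ y)) x (g x)| :=
        (neg_le_abs _).trans (abs_integral_le_integral_abs)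
    _ ≤ ∫ x in Ω, √(2 * W (φ x)) * ‖gradient φ x‖ :=
        setIntegral_mono_on hDu.abs hs hΩ.measurableSet hbound

lemma tendsto_setIntegral_wellProfile_comp_mul_vdiv {G : Set (EuclideanSpace ℝ (Fin n))}
    (hG : MeasurableSet G) (hGΩ : G ⊆ Ω) (hΩ : MeasurableSet Ω)
    {φ : ℕ → EuclideanSpace ℝ (Fin n) → ℝ} (hφ : ∀ k, ContinuousOn (φ k) Ω)
    (hae : ∀ᵐ x ∂(volume.restrict Ω),
      Tendsto (fun k => φ k x) atTop (𝓝 (G.indicator (fun _ => (1 : ℝ)) x)))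
    (hg : ContDiff ℝ 1 g) (hgc : HasCompactSupport g) :
    Tendsto (fun k => ∫ x in Ω, wellProfile (φ k x) * vdiv g x) atTop
      (𝓝 (∫ x in G, vdiv g x)) := by
  have hlim : ∫ x in Ω, G.indicator (fun _ => (1 : ℝ)) x * vdiv g x = ∫ x in G, vdiv g x := by
    simp_rw [← Set.indicator_mul_left, one_mul]
    rw [integral_indicator hG, Measure.restrict_restrict hG, Set.inter_eq_left.2 hGΩ]
  rw [← hlim]
  refine tendsto_integral_of_dominated_convergence (fun x => |vdiv g x|)
    (fun k => (integrableOn_wellProfile_comp_mul_vdiv hΩ (hφ k) hg hgc).aestronglyMeasurable)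
    (integrable_vdiv hg hgc).abs.integrableOn (fun k => Eventually.of_forall fun x => ?_) ?_
  · rw [norm_mul, Real.norm_eq_abs, Real.norm_eq_abs]
    exact mul_le_of_le_one_left (abs_nonneg _) (abs_wellProfile_le_one _)
  · filter_upwards [hae] with x hx
    have h := (contDiff_wellProfile.continuous.tendsto _).comp hx
    rw [wellProfile_indicator_one] at h
    exact h.mul_const _

lemma integrableOn_sqrt_mul_norm_gradient (hΩ : IsOpen Ω) (hφ : ContDiffOn ℝ 1 φ Ω)
    (hgrad : IntegrableOn (fun x => ‖gradient φ x‖ ^ 2) Ω)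
    (hW : IntegrableOn (fun x => W (φ x)) Ω) :
    IntegrableOn (fun x => √(2 * W (φ x)) * ‖gradient φ x‖) Ω := by
  refine Integrable.mono' ((hgrad.const_mul (1 / 2)).add hW)
    ((((continuous_W.const_mul 2).sqrt.comp_continuousOn hφ.continuousOn).mul
      (hφ.continuousOn_norm_gradient hΩ)).aestronglyMeasurable hΩ.measurableSet)
    (Eventually.of_forall fun x => ?_)
  rw [Real.norm_of_nonneg (by positivity)]
  simpa using sqrt_two_mul_mul_le (t := ‖gradient φ x‖) one_pos (W_nonneg (φ x))

lemma setIntegral_abs_sub_le {ξ ε : ℝ} (hξ : 0 < ξ) (hε : 0 < ε)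
    (hgrad : IntegrableOn (fun x => ‖gradient φ x‖ ^ 2) Ω)
    (hW : IntegrableOn (fun x => W (φ x)) Ω)
    (hs : IntegrableOn (fun x => √(2 * W (φ x)) * ‖gradient φ x‖) Ω) :
    ∫ x in Ω, |ξ / 2 * ‖gradient φ x‖ ^ 2 - W (φ x) / ξ| ≤
      ε * (∫ x in Ω, (ξ / 2 * ‖gradient φ x‖ ^ 2 + W (φ x) / ξ)) +
        ((∫ x in Ω, (ξ / 2 * ‖gradient φ x‖ ^ 2 + W (φ x) / ξ)) -
          ∫ x in Ω, √(2 * W (φ x)) * ‖gradient φ x‖) / ε := by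
  have hE : IntegrableOn (fun x => ξ / 2 * ‖gradient φ x‖ ^ 2 + W (φ x) / ξ) Ω :=
    (hgrad.const_mul _).add (hW.div_const _)
  rw [← integral_sub hE hs, ← integral_div, ← integral_const_mul,
    ← integral_add (hE.const_mul _) (by exact (hE.sub hs).div_const _)]
  refine integral_mono ((hgrad.const_mul _).sub (hW.div_const _)).abs
    ((hE.const_mul _).add ((hE.sub hs).div_const _)) fun x => ?_
  have hw := W_nonneg (φ x)
  refine abs_sub_le_of_sq_eq hε (by positivity) (by positivity) (by positivity) ?_
  rw [mul_pow, Real.sq_sqrt (by positivity)]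
  field_simp
  ring

end Energy

lemma eventually_lt_of_lt_sSup {ι : Type*} {l : Filter ι} {A : Set ℝ} {S : ι → ℝ} {a : ℝ}
    (ha : a < sSup A) (hS : ∀ i, 0 ≤ S i) (hA : ∀ r ∈ A, a < r → ∀ᶠ i in l, a < S i) :
    ∀ᶠ i in l, a < S i := by
  rcases lt_or_ge a 0 with ha0 | ha0
  · exact Eventually.of_forall fun i => ha0.trans_le (hS i)
  · by_contra h
    exact ha.not_ge (Real.sSup_le (fun r hr => not_lt.1 fun har => h (hA r hr har)) ha0)

lemma tendsto_zero_of_le_mul_add_div {ι : Type*} {l : Filter ι} {D E S : ι → ℝ} {P : ℝ}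
    (hD : ∀ i, 0 ≤ D i) (hDES : ∀ ε > 0, ∀ i, D i ≤ ε * E i + (E i - S i) / ε)
    (hE : Tendsto E l (𝓝 P)) (hS : Tendsto S l (𝓝 P)) : Tendsto D l (𝓝 0) := by
  refine tendsto_order.2 ⟨fun a ha => Eventually.of_forall fun i => ha.trans_le (hD i),
    fun b hb => ?_⟩
  set ε := b / (2 * (|P| + 1)) with hε_def
  have hε : 0 < ε := by positivity
  have hlim : Tendsto (fun i => ε * E i + (E i - S i) / ε) l (𝓝 (ε * P)) := by
    simpa using (hE.const_mul ε).add ((hE.sub hS).div_const ε)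
  have hεP : ε * P < b := calc
    ε * P ≤ ε * (|P| + 1) := mul_le_mul_of_nonneg_left (by linarith [le_abs_self P]) hε.le
    _ = b / 2 := by rw [hε_def]; field_simp
    _ < b := half_lt_self hb
  exact (hlim.eventually_lt_const hεP).mono fun i hi => (hDES ε hε i).trans_lt hi

theorem equipartition_abs_general {n : ℕ}
    (Ω : Set (EuclideanSpace ℝ (Fin n))) (hΩopen : IsOpen Ω)
    (G : Set (EuclideanSpace ℝ (Fin n))) (hGmeas : MeasurableSet G) (hGΩ : G ⊆ Ω)
    (ξ : ℕ → ℝ) (hξpos : ∀ k, 0 < ξ k)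
    (φ : ℕ → EuclideanSpace ℝ (Fin n) → ℝ)
    (hφ : ∀ k, ContDiffOn ℝ 1 (φ k) Ω)
    (hgradInt : ∀ k, IntegrableOn (fun x => ‖gradient (φ k) x‖ ^ 2) Ω)
    (hWInt : ∀ k, IntegrableOn (fun x => W (φ k x)) Ω)
    (hae : ∀ᵐ x ∂(volume.restrict Ω),
      Tendsto (fun k => φ k x) atTop (𝓝 (G.indicator (fun _ => (1 : ℝ)) x)))
    (henergy : Tendsto
      (fun k => ∫ x in Ω, (ξ k / 2 * ‖gradient (φ k) x‖ ^ 2 + W (φ k x) / ξ k))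
      atTop (𝓝 (perim Ω G))) :
    Tendsto (fun k => ∫ x in Ω,
        |ξ k / 2 * ‖gradient (φ k) x‖ ^ 2 - W (φ k x) / ξ k|)
      atTop (𝓝 0) := by
  have hs k := integrableOn_sqrt_mul_norm_gradient hΩopen (hφ k) (hgradInt k) (hWInt k)
  have hS : Tendsto (fun k => ∫ x in Ω, √(2 * W (φ k x)) * ‖gradient (φ k) x‖) atTop
      (𝓝 (perim Ω G)) := by
    refine tendsto_order.2 ⟨fun a ha => eventually_lt_of_lt_sSup ha
      (fun k => integral_nonneg fun x => by positivity) ?_, fun b hb => ?_⟩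
    · rintro r ⟨g, hg, hgc, hgΩ, hg1, rfl⟩ har
      filter_upwards [(tendsto_setIntegral_wellProfile_comp_mul_vdiv hGmeas hGΩ
        hΩopen.measurableSet (fun k => (hφ k).continuousOn) hae hg hgc).eventually_const_lt har]
        with k hk
      exact hk.trans_le
        (setIntegral_wellProfile_comp_mul_vdiv_le hΩopen (hφ k) (hs k) hg hgc hgΩ hg1)
    · filter_upwards [henergy.eventually_lt_const hb] with k hk
      refine lt_of_le_of_lt (integral_mono (hs k) ((hgradInt k).const_mul _ |>.add
        ((hWInt k).div_const _)) fun x => ?_) hk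
      exact sqrt_two_mul_mul_le (hξpos k) (W_nonneg _)
  exact tendsto_zero_of_le_mul_add_div (fun k => integral_nonneg fun x => abs_nonneg _)
    (fun ε hε k => setIntegral_abs_sub_le (hξpos k) hε (hgradInt k) (hWInt k) (hs k)) henergy hS

/-- asymptotic equi-partition of energy. -/
theorem equipartition_abs {n : ℕ} (hn : 2 ≤ n)
    (Ω : Set (EuclideanSpace ℝ (Fin n))) (hΩne : Ω.Nonempty) (hΩopen : IsOpen Ω)
    (hΩbdd : Bornology.IsBounded Ω)
    (G : Set (EuclideanSpace ℝ (Fin n))) (hGmeas : MeasurableSet G) (hGΩ : G ⊆ Ω)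
    (hPfin : BddAbove (perimSet Ω G))
    (ξ : ℕ → ℝ) (hξpos : ∀ k, 0 < ξ k) (hξanti : StrictAnti ξ)
    (hξ0 : Tendsto ξ atTop (𝓝 0))
    (φ : ℕ → EuclideanSpace ℝ (Fin n) → ℝ)
    (hφ : ∀ k, ContDiffOn ℝ 1 (φ k) Ω)
    (hgradInt : ∀ k, IntegrableOn (fun x => ‖gradient (φ k) x‖ ^ 2) Ω)
    (hWInt : ∀ k, IntegrableOn (fun x => W (φ k x)) Ω)
    (hae : ∀ᵐ x ∂(volume.restrict Ω),
      Tendsto (fun k => φ k x) atTop (𝓝 (G.indicator (fun _ => (1 : ℝ)) x)))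
    (henergy : Tendsto
      (fun k => ∫ x in Ω, (ξ k / 2 * ‖gradient (φ k) x‖ ^ 2 + W (φ k x) / ξ k))
      atTop (𝓝 (perim Ω G))) :
    Tendsto (fun k => ∫ x in Ω,
        |ξ k / 2 * ‖gradient (φ k) x‖ ^ 2 - W (φ k x) / ξ k|)
      atTop (𝓝 0) :=
  equipartition_abs_general Ω hΩopen G hGmeas hGΩ ξ hξpos φ hφ hgradInt hWInt hae henergy
end

section
/- Let Ω ⊆ ℝ³ be open, let ε : ℝ → ℝ be continuously differentiable, let B : ℝ → ℝ be continuously differentiable, let ρ : Ω → ℝ be continuous, and let φ, ψ : Ω → ℝ be twice continuously differentiable and satisfy div(ε(φ) ∇ψ) − (φ − 1)² B'(ψ) = −ρ everywhere in Ω. Let V : Ω → ℝ³ be a continuously differentiable vector field with compact support in Ω. Define T_ele := ε(φ) ∇ψ ⊗ ∇ψ − [ (ε(φ)/2)|∇ψ|² + (φ − 1)² B(ψ) ] I₃. Then ∫_Ω [ −(ε'(φ)/2)|∇ψ|² − 2(φ − 1) B(ψ) ] (∇φ · V) dx = − ∫_Ω [ T_ele : ∇V − ρ (∇ψ · V) ]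 dx, where T_ele : ∇V := ∑_{i,j} (T_ele)_{ij} ∂_j V_i. -/
open MeasureTheory Filter Topology

/-- The partial derivative `∂_i f` of a scalar field on `ℝ³`. -/
noncomputable def pd (f : EuclideanSpace ℝ (Fin 3) → ℝ) (i : Fin 3)
    (x : EuclideanSpace ℝ (Fin 3)) : ℝ :=
  fderiv ℝ f x (EuclideanSpace.single i 1)

/-- The electrostatic stress tensor
`T_ele = ε(φ) ∇ψ ⊗ ∇ψ − [ (ε(φ)/2)|∇ψ|² + (φ−1)² B(ψ) ] I₃`, entrywise. -/
noncomputable def Tele (ε B : ℝ → ℝ) (φ ψ : EuclideanSpace ℝ (Fin 3) → ℝ)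
    (i j : Fin 3) (x : EuclideanSpace ℝ (Fin 3)) : ℝ :=
  ε (φ x) * pd ψ i x * pd ψ j x
    - (ε (φ x) / 2 * ∑ l, (pd ψ l x) ^ 2 + (φ x - 1) ^ 2 * B (ψ x))
        * (if i = j then 1 else 0)

/-! The rows of the stress tensor have divergence equal to the force density: by the product
rule and the symmetry of the Hessian of `ψ`,
`∑_j ∂_j T_ij = ∂_iψ (div(ε(φ)∇ψ) − (φ−1)² B'(ψ)) + (−(ε'(φ)/2)|∇ψ|² − 2(φ−1)B(ψ)) ∂_iφ`,
and the Poisson–Boltzmann equation turns the first bracket into `−ρ`. Hence the sum of the two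
integrands is the divergence of the field `(∑_i T_ij V_i)_j`, which is `C¹` with compact support,
so its integral vanishes. -/

local notation "E3" => EuclideanSpace ℝ (Fin 3)

attribute [local fun_prop] continuousOn_finsetSum

theorem contDiff_of_contDiffOn_of_tsupport_subset {𝕜 E F : Type*} [NontriviallyNormedField 𝕜]
    [NormedAddCommGroup E] [NormedSpace 𝕜 E] [NormedAddCommGroup F] [NormedSpace 𝕜 F]
    {n : WithTop ℕ∞} {f : E → F} {s : Set E} (hf : ContDiffOn 𝕜 n f s) (hs : IsOpen s)
    (hfs : tsupport f ⊆ s) : ContDiff 𝕜 n f :=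
  contDiff_of_contDiffOn_union_of_isOpen hf
    (contDiffOn_const.congr fun _ hx => image_eq_zero_of_notMem_tsupport hx)
    (Set.compl_subset_iff_union.mp (Set.compl_subset_compl.mpr hfs)) hs
    (isClosed_tsupport f).isOpen_compl

theorem integral_fderiv_apply_eq_zero {E : Type*} [NormedAddCommGroup E] [NormedSpace ℝ E]
    [FiniteDimensional ℝ E] [MeasurableSpace E] [BorelSpace E] {μ : Measure E}
    [μ.IsAddHaarMeasure] {g : E → ℝ} (hg : ContDiff ℝ 1 g) (hgc : HasCompactSupport g) (v : E) :
    ∫ x, fderiv ℝ g x v ∂μ = 0 := by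
  have hg' : Integrable (fun x => fderiv ℝ g x v) μ :=
    ((hg.continuous_fderiv one_ne_zero).clm_apply continuous_const).integrable_of_hasCompactSupport
      (hgc.fderiv_apply ℝ v)
  simpa using integral_mul_fderiv_eq_neg_fderiv_mul_of_integrable (f := fun _ => (1 : ℝ))
    (by simp) (by simpa using hg')
    (by simpa using hg.continuous.integrable_of_hasCompactSupport hgc)
    (fun x _ => differentiableAt_const _) (fun x _ => hg.differentiable one_ne_zero x)

section PartialDerivative

variable {f g : E3 → ℝ} {x : E3}

theorem pd_add (hf : DifferentiableAt ℝ f x) (hg : DifferentiableAt ℝ g x) (i : Fin 3) :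
    pd (fun y => f y + g y) i x = pd f i x + pd g i x := by
  simp [pd, fderiv_fun_add hf hg]

theorem pd_sub (hf : DifferentiableAt ℝ f x) (hg : DifferentiableAt ℝ g x) (i : Fin 3) :
    pd (fun y => f y - g y) i x = pd f i x - pd g i x := by
  simp [pd, fderiv_fun_sub hf hg]

theorem pd_mul (hf : DifferentiableAt ℝ f x) (hg : DifferentiableAt ℝ g x) (i : Fin 3) :
    pd (fun y => f y * g y) i x = pd f i x * g x + f x * pd g i x := by
  simp [pd, fderiv_fun_mul hf hg]; ring

theorem pd_mul_const (hf : DifferentiableAt ℝ f x) (c : ℝ) (i : Fin 3) :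
    pd (fun y => f y * c) i x = pd f i x * c := by
  simp only [pd]
  rw [fderiv_mul_const hf]
  simp [mul_comm]

theorem pd_div_const (hf : DifferentiableAt ℝ f x) (c : ℝ) (i : Fin 3) :
    pd (fun y => f y / c) i x = pd f i x / c := by
  simpa only [div_eq_mul_inv] using pd_mul_const hf c⁻¹ i

theorem pd_const (c : ℝ) (i : Fin 3) : pd (fun _ => c) i x = 0 := by
  simp [pd]

theorem pd_pow (hf : DifferentiableAt ℝ f x) (n : ℕ) (i : Fin 3) :
    pd (fun y => f y ^ n) i x = n * f x ^ (n - 1) * pd f i x := by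
  simp [pd, show (fun y => f y ^ n) = f ^ n from rfl, fderiv_pow n hf]

theorem pd_sum {ι : Type*} (s : Finset ι) {F : ι → E3 → ℝ}
    (hF : ∀ k ∈ s, DifferentiableAt ℝ (F k) x) (i : Fin 3) :
    pd (fun y => ∑ k ∈ s, F k y) i x = ∑ k ∈ s, pd (F k) i x := by
  simp [pd, fderiv_fun_sum hF]

theorem pd_comp {h : ℝ → ℝ} (hh : DifferentiableAt ℝ h (f x)) (hf : DifferentiableAt ℝ f x)
    (i : Fin 3) : pd (fun y => h (f y)) i x = deriv h (f x) * pd f i x := by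
  simp [pd, fderiv_fun_comp x hh hf, mul_comm]

theorem pd_eq_zero_of_notMem_tsupport (h : x ∉ tsupport f) (i : Fin 3) : pd f i x = 0 := by
  simp [pd, fderiv_of_notMem_tsupport ℝ h]

theorem ContDiffAt.differentiableAt_pd (hf : ContDiffAt ℝ 2 f x) (i : Fin 3) :
    DifferentiableAt ℝ (pd f i) x :=
  ((hf.fderiv_right (m := 1) le_rfl).differentiableAt one_ne_zero).clm_apply
    (differentiableAt_const _)

theorem pd_pd_comm (hf : ContDiffAt ℝ 2 f x) (i j : Fin 3) :
    pd (pd f i) j x = pd (pd f j) i x := by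
  have hf' := (hf.fderiv_right (m := 1) le_rfl).differentiableAt one_ne_zero
  have hfderiv : ∀ k l, pd (pd f k) l x =
      fderiv ℝ (fderiv ℝ f) x (EuclideanSpace.single l 1) (EuclideanSpace.single k 1) := by
    intro k l
    change fderiv ℝ (fun y => fderiv ℝ f y (EuclideanSpace.single k 1)) x _ = _
    simp [fderiv_clm_apply hf' (differentiableAt_const _)]
  rw [hfderiv, hfderiv, hf.isSymmSndFDerivAt (by simp)]

theorem ContDiffOn.contDiffOn_pd {s : Set E3} {m n : WithTop ℕ∞} (hf : ContDiffOn ℝ n f s)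
    (hs : IsOpen s) (hmn : m + 1 ≤ n) (i : Fin 3) : ContDiffOn ℝ m (pd f i) s :=
  (hf.fderiv_of_isOpen hs hmn).clm_apply contDiffOn_const

theorem ContDiffOn.continuousOn_pd {s : Set E3} {n : WithTop ℕ∞} (hf : ContDiffOn ℝ n f s)
    (hs : IsOpen s) (hn : 1 ≤ n) (i : Fin 3) : ContinuousOn (pd f i) s :=
  (hf.contDiffOn_pd (m := 0) hs (by simpa using hn) i).continuousOn

theorem ContDiff.continuous_pd (hf : ContDiff ℝ 1 f) (i : Fin 3) : Continuous (pd f i) :=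
  (hf.continuous_fderiv one_ne_zero).clm_apply continuous_const

theorem integral_sum_pd_eq_zero {F : Fin 3 → E3 → ℝ} (hF : ∀ j, ContDiff ℝ 1 (F j))
    (hFc : ∀ j, HasCompactSupport (F j)) : ∫ x, ∑ j, pd (F j) j x = 0 := by
  rw [integral_finsetSum]
  · exact Finset.sum_eq_zero fun j _ => integral_fderiv_apply_eq_zero (hF j) (hFc j) _
  · exact fun j _ =>
      ((hF j).continuous_pd j).integrable_of_hasCompactSupport ((hFc j).fderiv_apply ℝ _)

theorem setIntegral_eq_neg_of_add_eq_sum_pd {Ω K : Set E3} (hΩ : IsOpen Ω) (hK : IsCompact K)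
    (hKΩ : K ⊆ Ω) {L R : E3 → ℝ} (hL : ContinuousOn L Ω) (hR : ContinuousOn R Ω)
    (hL0 : ∀ x ∉ K, L x = 0) (hR0 : ∀ x ∉ K, R x = 0) {F : Fin 3 → E3 → ℝ}
    (hF : ∀ j, ContDiff ℝ 1 (F j)) (hFK : ∀ j, tsupport (F j) ⊆ K)
    (hLR : ∀ x ∈ K, L x + R x = ∑ j, pd (F j) j x) :
    ∫ x in Ω, L x = -∫ x in Ω, R x := by
  have hdiv0 : ∀ x ∉ K, ∑ j, pd (F j) j x = 0 := fun x hx =>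
    Finset.sum_eq_zero fun j _ => pd_eq_zero_of_notMem_tsupport (fun h => hx (hFK j h)) j
  have hsum : (∫ x in K, L x) + ∫ x in K, R x = 0 := by
    rw [← integral_add ((hL.mono hKΩ).integrableOn_compact hK)
        ((hR.mono hKΩ).integrableOn_compact hK),
      setIntegral_congr_fun hK.isClosed.measurableSet hLR,
      setIntegral_eq_integral_of_forall_compl_eq_zero hdiv0]
    exact integral_sum_pd_eq_zero hF fun j => hK.of_isClosed_subset (isClosed_tsupport _) (hFK j)
  rw [setIntegral_eq_of_subset_of_forall_sdiff_eq_zero hΩ.measurableSet hKΩ fun x hx => hL0 x hx.2,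
    setIntegral_eq_of_subset_of_forall_sdiff_eq_zero hΩ.measurableSet hKΩ fun x hx => hR0 x hx.2]
  linarith

end PartialDerivative

section Stress

variable {ε B : ℝ → ℝ} {φ ψ : E3 → ℝ} {V : E3 → E3} {s : Set E3} {x : E3}

theorem sum_pd_Tele (hε : DifferentiableAt ℝ ε (φ x)) (hB : DifferentiableAt ℝ B (ψ x))
    (hφ : DifferentiableAt ℝ φ x) (hψ : ContDiffAt ℝ 2 ψ x) (i : Fin 3) :
    ∑ j, pd (Tele ε B φ ψ i j) j x
      = pd ψ i x * (∑ j, pd (fun y => ε (φ y) * pd ψ j y) j x - (φ x - 1) ^ 2 * deriv B (ψ x))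
        + (-(deriv ε (φ x)) / 2 * ∑ l, pd ψ l x ^ 2 - 2 * (φ x - 1) * B (ψ x)) * pd φ i x := by
  have hψd : DifferentiableAt ℝ ψ x := hψ.differentiableAt (by simp)
  have hψ' : ∀ l, DifferentiableAt ℝ (pd ψ l) x := hψ.differentiableAt_pd
  have hεφ : DifferentiableAt ℝ (fun y => ε (φ y)) x := hε.comp x hφ
  have hBψ : DifferentiableAt ℝ (fun y => B (ψ y)) x := hB.comp x hψd
  unfold Tele
  simp (disch := fun_prop) only [pd_sub, pd_mul, pd_add, pd_div_const, pd_pow, pd_sum, pd_comp,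
    pd_const]
  have hsym : ∀ l, pd (pd ψ l) i x = pd (pd ψ i) l x := fun l => pd_pd_comm hψ l i
  simp only [mul_ite, mul_one, mul_zero, add_zero, Finset.sum_sub_distrib, Finset.sum_ite_eq,
    Finset.mem_univ, if_true, hsym]
  simp only [Fin.sum_univ_three]
  ring

theorem differentiableAt_Tele (hε : DifferentiableAt ℝ ε (φ x)) (hB : DifferentiableAt ℝ B (ψ x))
    (hφ : DifferentiableAt ℝ φ x) (hψ : ContDiffAt ℝ 2 ψ x) (i j : Fin 3) :
    DifferentiableAt ℝ (Tele ε B φ ψ i j) x := by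
  have hψd : DifferentiableAt ℝ ψ x := hψ.differentiableAt (by simp)
  have hψ' : ∀ l, DifferentiableAt ℝ (pd ψ l) x := hψ.differentiableAt_pd
  have hεφ : DifferentiableAt ℝ (fun y => ε (φ y)) x := hε.comp x hφ
  have hBψ : DifferentiableAt ℝ (fun y => B (ψ y)) x := hB.comp x hψd
  unfold Tele
  fun_prop

theorem force_integrand_add_stress_integrand_eq_sum_pd (hε : DifferentiableAt ℝ ε (φ x))
    (hB : DifferentiableAt ℝ B (ψ x)) (hφ : DifferentiableAt ℝ φ x) (hψ : ContDiffAt ℝ 2 ψ x)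
    {ρ : ℝ} (hPB : (∑ j, pd (fun y => ε (φ y) * pd ψ j y) j x) - (φ x - 1) ^ 2 * deriv B (ψ x) = -ρ)
    (hV : DifferentiableAt ℝ V x) :
    (-(deriv ε (φ x)) / 2 * (∑ l, (pd ψ l x) ^ 2) - 2 * (φ x - 1) * B (ψ x))
          * (∑ i, pd φ i x * V x i)
        + ((∑ i, ∑ j, Tele ε B φ ψ i j x * pd (fun y => V y i) j x)
          - ρ * (∑ i, pd ψ i x * V x i))
      = ∑ j, pd (fun y => ∑ i, Tele ε B φ ψ i j y * V y i) j x := by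
  have hT := differentiableAt_Tele hε hB hφ hψ
  simp (disch := fun_prop) only [pd_sum, pd_mul]
  conv_rhs => rw [Finset.sum_comm]
  simp only [Finset.sum_add_distrib, ← Finset.sum_mul, sum_pd_Tele hε hB hφ hψ, hPB]
  simp only [Fin.sum_univ_three]
  ring

theorem contDiffOn_Tele {m n : WithTop ℕ∞} (hε : ContDiff ℝ m ε)
    (hB : ContDiff ℝ m B) (hφ : ContDiffOn ℝ m φ s) (hψ : ContDiffOn ℝ n ψ s) (hs : IsOpen s)
    (hmn : m + 1 ≤ n) (i j : Fin 3) : ContDiffOn ℝ m (Tele ε B φ ψ i j) s := by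
  have hψ' : ∀ l, ContDiffOn ℝ m (pd ψ l) s := hψ.contDiffOn_pd hs hmn
  have hψm : ContDiffOn ℝ m ψ s := hψ.of_le (le_self_add.trans hmn)
  have hεφ : ContDiffOn ℝ m (fun y => ε (φ y)) s := hε.comp_contDiffOn hφ
  have hBψ : ContDiffOn ℝ m (fun y => B (ψ y)) s := hB.comp_contDiffOn hψm
  unfold Tele
  fun_prop

theorem continuousOn_force_integrand (hε : ContDiff ℝ 1 ε) (hB : Continuous B)
    (hφ : ContDiffOn ℝ 1 φ s) (hψ : ContDiffOn ℝ 1 ψ s) (hs : IsOpen s) (hV : Continuous V) :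
    ContinuousOn (fun x => (-(deriv ε (φ x)) / 2 * (∑ l, (pd ψ l x) ^ 2)
      - 2 * (φ x - 1) * B (ψ x)) * (∑ i, pd φ i x * V x i)) s := by
  have hε' : Continuous (deriv ε) := hε.continuous_deriv le_rfl
  have hφc := hφ.continuousOn
  have hψc := hψ.continuousOn
  have hφ' : ∀ i, ContinuousOn (pd φ i) s := hφ.continuousOn_pd hs le_rfl
  have hψ' : ∀ i, ContinuousOn (pd ψ i) s := hψ.continuousOn_pd hs le_rfl
  have hV' : ∀ i, ContinuousOn (fun y => V y i) s := fun i =>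
    ((PiLp.continuous_apply 2 _ i).comp hV).continuousOn
  fun_prop (disch := norm_num)

theorem continuousOn_stress_integrand (hε : Continuous ε) (hB : Continuous B)
    (hφ : ContinuousOn φ s) (hψ : ContDiffOn ℝ 1 ψ s) (hs : IsOpen s) {ρ : E3 → ℝ}
    (hρ : ContinuousOn ρ s) (hV : ContDiff ℝ 1 V) :
    ContinuousOn (fun x => (∑ i, ∑ j, Tele ε B φ ψ i j x * pd (fun y => V y i) j x)
      - ρ x * (∑ i, pd ψ i x * V x i)) s := by
  have hT : ∀ i j, ContinuousOn (Tele ε B φ ψ i j) s := fun i j =>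
    (contDiffOn_Tele (contDiff_zero.2 hε) (contDiff_zero.2 hB) (contDiffOn_zero.2 hφ) hψ hs
      (by simp) i j).continuousOn
  have hψ' : ∀ i, ContinuousOn (pd ψ i) s := hψ.continuousOn_pd hs le_rfl
  have hVi : ∀ i, ContDiff ℝ 1 (fun y => V y i) := fun i => by fun_prop
  have hV' : ∀ i, ContinuousOn (fun y => V y i) s := fun i => (hVi i).continuous.continuousOn
  have hV'' : ∀ i j, ContinuousOn (pd (fun y => V y i) j) s := fun i j =>
    ((hVi i).continuous_pd j).continuousOn
  fun_prop

end Stress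

/-- if `div(ε(φ)∇ψ) − (φ−1)² B'(ψ) = −ρ` on `Ω` then, for every compactly
supported C¹ vector field `V` on `Ω`,
`∫_Ω [−(ε'(φ)/2)|∇ψ|² − 2(φ−1)B(ψ)] (∇φ·V) dx = −∫_Ω [T_ele : ∇V − ρ (∇ψ·V)] dx`. -/
theorem electrostatic_stress_integration_by_parts
    (Ω : Set (EuclideanSpace ℝ (Fin 3))) (hΩ : IsOpen Ω)
    (ε B : ℝ → ℝ) (hε : ContDiff ℝ 1 ε) (hB : ContDiff ℝ 1 B)
    (ρ : EuclideanSpace ℝ (Fin 3) → ℝ) (hρ : ContinuousOn ρ Ω)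
    (φ ψ : EuclideanSpace ℝ (Fin 3) → ℝ)
    (hφ : ContDiffOn ℝ 2 φ Ω) (hψ : ContDiffOn ℝ 2 ψ Ω)
    (hPB : ∀ x ∈ Ω,
      (∑ j, pd (fun y => ε (φ y) * pd ψ j y) j x) - (φ x - 1) ^ 2 * deriv B (ψ x)
        = -ρ x)
    (V : EuclideanSpace ℝ (Fin 3) → EuclideanSpace ℝ (Fin 3))
    (hV : ContDiff ℝ 1 V) (hVcpt : HasCompactSupport V) (hVsupp : tsupport V ⊆ Ω) :
    ∫ x in Ω, (-(deriv ε (φ x)) / 2 * (∑ l, (pd ψ l x) ^ 2)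
          - 2 * (φ x - 1) * B (ψ x)) * (∑ i, pd φ i x * V x i)
      = -∫ x in Ω, ((∑ i, ∑ j, Tele ε B φ ψ i j x * pd (fun y => V y i) j x)
          - ρ x * (∑ i, pd ψ i x * V x i)) := by
  have hφ1 : ContDiffOn ℝ 1 φ Ω := hφ.of_le one_le_two
  have hψ1 : ContDiffOn ℝ 1 ψ Ω := hψ.of_le one_le_two
  have hV0 : ∀ x ∉ tsupport V, V x = 0 := fun x hx => image_eq_zero_of_notMem_tsupport hx
  have hpdV0 : ∀ x ∉ tsupport V, ∀ i j, pd (fun y => V y i) j x = 0 := fun x hx i =>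
    pd_eq_zero_of_notMem_tsupport fun h =>
      hx (tsupport_comp_subset (g := fun v : E3 => v i) rfl V h)
  have hFK : ∀ j, tsupport (fun y => ∑ i, Tele ε B φ ψ i j y * V y i) ⊆ tsupport V := fun j =>
    closure_minimal (Function.support_subset_iff'.2 fun x hx => by simp [hV0 x hx])
      (isClosed_tsupport V)
  refine setIntegral_eq_neg_of_add_eq_sum_pd hΩ hVcpt hVsupp
    (continuousOn_force_integrand hε hB.continuous hφ1 hψ1 hΩ hV.continuous)
    (continuousOn_stress_integrand hε.continuous hB.continuous hφ.continuousOn hψ1 hΩ hρ hV)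
    (fun x hx => by simp [hV0 x hx]) (fun x hx => by simp [hV0 x hx, hpdV0 x hx])
    (fun j => contDiff_of_contDiffOn_of_tsupport_subset ?_ hΩ ((hFK j).trans hVsupp)) hFK
    fun x hx => ?_
  · have hT := contDiffOn_Tele hε hB hφ1 hψ hΩ le_rfl
    fun_prop
  · have hxΩ := hΩ.mem_nhds (hVsupp hx)
    exact force_integrand_add_stress_integrand_eq_sum_pd (hε.differentiable one_ne_zero _)
      (hB.differentiable one_ne_zero _) ((hφ1.differentiableOn one_ne_zero).differentiableAt hxΩ)
      (hψ.contDiffAt hxΩ) (hPB x (hVsupp hx)) (hV.differentiable one_ne_zero x)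
end
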